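/- Let ν > 0, let 0 ≤ b < a, and let t > 0. Then I(t) = I_1(t) + I_2(t) + I_3(t), where I_1(t) := (1/((2t)^ν Γ(ν+1))) (a^{2ν} exp(-a²/(2t)) − b^{2ν} exp(-b²/(2t))), I_2(t) := F_{ν+1}(a,t) − F_{ν+1}(b,t), and I_3(t) := F_ν(b,t) (F_ν(a,t) − F_ν(b,t)) / (1 − F_ν(b,t)). -/

import Mathlib

/-!
Integrating by parts against `d(s^{-ν})` gives the recurrence
`F_ν(x,t) = x^{2ν} e^{-x²/(2t)} / ((2t)^ν Γ(ν+1)) + F_{ν+1}(x,t)`,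
so `F_ν(a,t) - F_ν(b,t) = I₁ + I₂`.
The theorem is then the identity `D / (1 - B) = D + B D / (1 - B)`, which needs `F_ν(b,t) ≠ 1`:
the substitution `u = b²/(2s)` turns `F_ν(b,t)` into the incomplete Gamma ratio
`γ(ν, b²/(2t)) / Γ(ν) < 1`.
-/

open MeasureTheory

/-- `F ν x t = (x^{2ν}/(2^ν Γ(ν))) ∫_t^∞ s^{-(ν+1)} exp(-x²/(2s)) ds`. -/
noncomputable def F (ν x t : ℝ) : ℝ :=
  (x ^ (2 * ν) / (2 ^ ν * Real.Gamma ν)) *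
    ∫ s in Set.Ioi t, s ^ (-(ν + 1)) * Real.exp (-x ^ 2 / (2 * s))

open Set Filter Topology

section Kernel

variable {c t : ℝ}

lemma exp_neg_div_le_one (hc : 0 ≤ c) {s : ℝ} (hs : 0 < s) : Real.exp (-c / (2 * s)) ≤ 1 :=
  Real.exp_le_one_iff.2 (div_nonpos_of_nonpos_of_nonneg (neg_nonpos.2 hc) (by positivity))

lemma integrableOn_Ioi_rpow_mul_exp_neg_div {p : ℝ} (hp : p < -1) (ht : 0 < t) (hc : 0 ≤ c) :
    IntegrableOn (fun s => s ^ p * Real.exp (-c / (2 * s))) (Ioi t) := by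
  refine (integrableOn_Ioi_rpow_of_lt hp ht).mono' ?_ ?_
  · refine ContinuousOn.aestronglyMeasurable (fun s hs => ?_) measurableSet_Ioi
    have hs0 : s ≠ 0 := (ht.trans hs).ne'
    exact ((Real.continuousAt_rpow_const s p (Or.inl hs0)).mul
      (by fun_prop (disch := positivity))).continuousWithinAt
  · filter_upwards [ae_restrict_mem measurableSet_Ioi] with s hs
    have hs0 : 0 < s := ht.trans hs
    rw [norm_mul, Real.norm_of_nonneg (by positivity), Real.norm_of_nonneg (Real.exp_pos _).le]
    exact mul_le_of_le_one_right (by positivity) (exp_neg_div_le_one hc hs0)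

lemma hasDerivAt_rpow_neg_mul_exp_neg_div (ν : ℝ) {s : ℝ} (hs : 0 < s) :
    HasDerivAt (fun s => s ^ (-ν) * Real.exp (-c / (2 * s)))
      (-ν * (s ^ (-(ν + 1)) * Real.exp (-c / (2 * s)))
        + c / 2 * (s ^ (-(ν + 2)) * Real.exp (-c / (2 * s)))) s := by
  have hpow : HasDerivAt (fun s : ℝ => s ^ (-ν)) (-ν * s ^ (-ν - 1)) s :=
    Real.hasDerivAt_rpow_const (Or.inl hs.ne')
  have hexp : HasDerivAt (fun s : ℝ => Real.exp (-c / (2 * s)))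
      (Real.exp (-c / (2 * s)) * (c / (2 * s ^ 2))) s := by
    have hquot : HasDerivAt (fun s : ℝ => -c / (2 * s))
        ((0 * (2 * s) - -c * 2) / (2 * s) ^ 2) s :=
      (hasDerivAt_const s (-c)).div (by simpa using (hasDerivAt_id s).const_mul 2)
        (by positivity)
    refine (Real.hasDerivAt_exp _).comp s (hquot.congr_deriv ?_)
    field_simp
    ring
  refine (hpow.mul hexp).congr_deriv ?_
  have h1 : s ^ (-(ν + 1)) = s ^ (-ν - 1) := by ring_nf
  have h2 : s ^ (-(ν + 2)) = s ^ (-ν) / s ^ 2 := by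
    rw [eq_div_iff (by positivity), ← Real.rpow_two, ← Real.rpow_add hs]
    norm_num
  rw [h1, h2]
  field_simp

lemma tendsto_rpow_neg_mul_exp_neg_div {ν : ℝ} (hν : 0 < ν) :
    Tendsto (fun s => s ^ (-ν) * Real.exp (-c / (2 * s))) atTop (𝓝 0) := by
  have hexp : Tendsto (fun s : ℝ => Real.exp (-c / (2 * s))) atTop (𝓝 1) := by
    have h : Tendsto (fun s : ℝ => -c / (2 * s)) atTop (𝓝 0) :=
      tendsto_const_nhds.div_atTop (tendsto_id.const_mul_atTop two_pos)
    simpa [Function.comp_def] using (Real.continuous_exp.tendsto 0).comp h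
  simpa using (tendsto_rpow_neg_atTop hν).mul hexp

lemma mul_integral_Ioi_rpow_mul_exp_neg_div {ν : ℝ} (hν : 0 < ν) (ht : 0 < t) (hc : 0 ≤ c) :
    ν * ∫ s in Ioi t, s ^ (-(ν + 1)) * Real.exp (-c / (2 * s))
      = t ^ (-ν) * Real.exp (-c / (2 * t))
        + c / 2 * ∫ s in Ioi t, s ^ (-(ν + 2)) * Real.exp (-c / (2 * s)) := by
  have hint₁ := integrableOn_Ioi_rpow_mul_exp_neg_div (p := -(ν + 1)) (by linarith) ht hc
  have hint₂ := integrableOn_Ioi_rpow_mul_exp_neg_div (p := -(ν + 2)) (by linarith) ht hc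
  have hftc := integral_Ioi_of_hasDerivAt_of_tendsto'
    (fun s hs => hasDerivAt_rpow_neg_mul_exp_neg_div ν (ht.trans_le hs))
    ((hint₁.const_mul _).add (hint₂.const_mul _)) (tendsto_rpow_neg_mul_exp_neg_div hν)
  rw [integral_add (hint₁.const_mul _) (hint₂.const_mul _), integral_const_mul,
    integral_const_mul] at hftc
  linarith

end Kernel

lemma rpow_two_mul_add_one (x : ℝ) {ν : ℝ} (hν : 0 < ν) :
    x ^ (2 * (ν + 1)) = x ^ (2 * ν) * x ^ 2 := by
  rcases eq_or_ne x 0 with rfl | hx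
  · simp [Real.zero_rpow, hν.ne', (by positivity : ν + 1 ≠ 0)]
  · rw [show 2 * (ν + 1) = 2 * ν + (2 : ℕ) by push_cast; ring, Real.rpow_add_natCast hx]

lemma F_eq_add_F_add_one {ν : ℝ} (hν : 0 < ν) (x : ℝ) {t : ℝ} (ht : 0 < t) :
    F ν x t = x ^ (2 * ν) * Real.exp (-x ^ 2 / (2 * t)) / ((2 * t) ^ ν * Real.Gamma (ν + 1))
      + F (ν + 1) x t := by
  have hibp := mul_integral_Ioi_rpow_mul_exp_neg_div hν ht (sq_nonneg x)
  rw [Real.rpow_neg ht.le] at hibp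
  rw [F, F, show -(ν + 1 + 1) = -(ν + 2) by ring, rpow_two_mul_add_one x hν,
    Real.mul_rpow two_pos.le ht.le, Real.rpow_add_one two_ne_zero, Real.Gamma_add_one hν.ne']
  have hΓ := Real.Gamma_pos_of_pos hν
  have htν := Real.rpow_pos_of_pos ht ν
  field_simp
  field_simp at hibp
  linear_combination x ^ (2 * ν) * hibp

lemma image_const_div_Ioi {c t : ℝ} (hc : 0 < c) (ht : 0 < t) :
    (c / ·) '' Ioi t = Ioo 0 (c / t) := by
  have : (c / ·) = (c * ·) ∘ Inv.inv := by ext s; simp [div_eq_mul_inv]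
  rw [this, image_comp, image_inv_eq_inv, inv_Ioi₀ ht, image_mul_left_Ioo hc]
  simp [div_eq_mul_inv]

lemma integral_Ioo_eq_integral_Ioi_const_div {c t : ℝ} (hc : 0 < c) (ht : 0 < t)
    (g : ℝ → ℝ) :
    ∫ u in Ioo 0 (c / t), g u = ∫ s in Ioi t, c / s ^ 2 * g (c / s) := by
  have hderiv : ∀ s ∈ Ioi t, HasDerivWithinAt (c / ·) (-c / s ^ 2) (Ioi t) s := fun s hs => by
    simpa [div_eq_mul_inv] using
      ((hasDerivAt_inv (ht.trans hs).ne').const_mul c).hasDerivWithinAt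
  have hinj : InjOn (c / ·) (Ioi t) := fun s _ s' _ h =>
    inv_injective (mul_left_cancel₀ hc.ne' (by simpa only [div_eq_mul_inv] using h))
  rw [← image_const_div_Ioi hc ht,
    integral_image_eq_integral_abs_deriv_smul measurableSet_Ioi hderiv hinj]
  refine setIntegral_congr_fun measurableSet_Ioi fun s hs => ?_
  have hs0 : 0 < s := ht.trans hs
  rw [abs_div, abs_neg, abs_of_pos hc, abs_of_pos (by positivity), smul_eq_mul]

lemma F_eq_integral_Ioo_div_Gamma (ν : ℝ) {b t : ℝ} (hb : 0 < b) (ht : 0 < t) :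
    F ν b t =
      (∫ u in Ioo 0 (b ^ 2 / (2 * t)), Real.exp (-u) * u ^ (ν - 1)) / Real.Gamma ν := by
  have hc : (0 : ℝ) < b ^ 2 / 2 := by positivity
  have hpoint : ∀ s ∈ Ioi t,
      b ^ 2 / 2 / s ^ 2 * (Real.exp (-(b ^ 2 / 2 / s)) * (b ^ 2 / 2 / s) ^ (ν - 1))
        = (b ^ 2 / 2) ^ ν * (s ^ (-(ν + 1)) * Real.exp (-b ^ 2 / (2 * s))) := fun s hs => by
    have hs0 : 0 < s := ht.trans hs
    rw [Real.div_rpow hc.le hs0.le, Real.rpow_sub_one hc.ne', Real.rpow_sub_one hs0.ne',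
      Real.rpow_neg hs0.le, Real.rpow_add_one hs0.ne', neg_div, div_div]
    have := Real.rpow_pos_of_pos hs0 ν
    field_simp
  rw [← div_div, integral_Ioo_eq_integral_Ioi_const_div hc ht,
    setIntegral_congr_fun measurableSet_Ioi hpoint, integral_const_mul, F,
    Real.div_rpow (sq_nonneg b) zero_le_two, ← Real.rpow_natCast_mul hb.le]
  push_cast
  ring

lemma integral_Ioo_lt_Gamma {ν T : ℝ} (hν : 0 < ν) (hT : 0 < T) :
    ∫ u in Ioo 0 T, Real.exp (-u) * u ^ (ν - 1) < Real.Gamma ν := by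
  have hint := Real.GammaIntegral_convergent hν
  have hpos : ∀ u ∈ Ici T, 0 < Real.exp (-u) * u ^ (ν - 1) := fun u hu =>
    mul_pos (Real.exp_pos _) (Real.rpow_pos_of_pos (hT.trans_le hu) _)
  have htail : 0 < ∫ u in Ici T, Real.exp (-u) * u ^ (ν - 1) := by
    rw [setIntegral_pos_iff_support_of_nonneg_ae
      (ae_restrict_of_forall_mem measurableSet_Ici fun u hu => (hpos u hu).le)
      (hint.mono_set (Ici_subset_Ioi.2 hT)),
      inter_eq_right.2 fun u hu => Function.mem_support.2 (hpos u hu).ne', Real.volume_Ici]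
    exact ENNReal.zero_lt_top
  rw [Real.Gamma_eq_integral hν, ← Ioo_union_Ici_eq_Ioi hT,
    setIntegral_union ((Iio_disjoint_Ici le_rfl).mono_left Ioo_subset_Iio_self) measurableSet_Ici
      (hint.mono_set Ioo_subset_Ioi_self) (hint.mono_set (Ici_subset_Ioi.2 hT))]
  linarith

lemma F_lt_one {ν b t : ℝ} (hν : 0 < ν) (hb : 0 ≤ b) (ht : 0 < t) : F ν b t < 1 := by
  rcases hb.eq_or_lt with rfl | hb
  · simp [F, Real.zero_rpow, hν.ne']
  rw [F_eq_integral_Ioo_div_Gamma ν hb ht, div_lt_one (Real.Gamma_pos_of_pos hν)]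
  exact integral_Ioo_lt_Gamma hν (by positivity)

theorem stmt_9_general (ν a b t : ℝ) (hν : 0 < ν) (hb : 0 ≤ b) (ht : 0 < t) :
    (F ν a t - F ν b t) / (1 - F ν b t) =
      (1 / ((2 * t) ^ ν * Real.Gamma (ν + 1))) *
          (a ^ (2 * ν) * Real.exp (-a ^ 2 / (2 * t)) -
            b ^ (2 * ν) * Real.exp (-b ^ 2 / (2 * t)))
        + (F (ν + 1) a t - F (ν + 1) b t)
        + F ν b t * (F ν a t - F ν b t) / (1 - F ν b t) := by
  have hdiff : F ν a t - F ν b t =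
      (1 / ((2 * t) ^ ν * Real.Gamma (ν + 1))) *
          (a ^ (2 * ν) * Real.exp (-a ^ 2 / (2 * t)) -
            b ^ (2 * ν) * Real.exp (-b ^ 2 / (2 * t)))
        + (F (ν + 1) a t - F (ν + 1) b t) := by
    rw [F_eq_add_F_add_one hν a ht, F_eq_add_F_add_one hν b ht]
    ring
  have hne : 1 - F ν b t ≠ 0 := (sub_pos.2 (F_lt_one hν hb ht)).ne'
  rw [← hdiff]
  field_simp
  ring

theorem stmt_9 (ν a b t : ℝ) (hν : 0 < ν) (hb : 0 ≤ b) (hba : b < a) (ht : 0 < t) :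
    (F ν a t - F ν b t) / (1 - F ν b t) =
      (1 / ((2 * t) ^ ν * Real.Gamma (ν + 1))) *
          (a ^ (2 * ν) * Real.exp (-a ^ 2 / (2 * t)) -
            b ^ (2 * ν) * Real.exp (-b ^ 2 / (2 * t)))
        + (F (ν + 1) a t - F (ν + 1) b t)
        + F ν b t * (F ν a t - F ν b t) / (1 - F ν b t) :=
  stmt_9_general ν a b t hν hb ht
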